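/- arXiv:2003.05187 — 2 statements merged into one kernel-verified Lean document; each statement's English description precedes it below -/
import Mathlib

section
/- The (extended-real-valued lower Lebesgue) integral of the extremal function is bounded by the dimension: ∫_X S(x) dμ(x) ≤ d. (First half of the integral inequality in Lemma 2.2 of the paper.) -/
open MeasureTheory
open scoped ENNReal ComplexConjugate

/-! Written in the orthonormal family, an element `a = ∑ cⱼ αⱼ` of `V` has `∫ ‖a‖² = ∑ |cⱼ|²`;
so if `∫ ‖a‖² ≤ 1`, Cauchy–Schwarz gives `‖a x‖² ≤ (∑ |cⱼ|²) B x ≤ B x`. Hence `S ≤ B` pointwise,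
and `∫ B = ∑ⱼ ∫ ‖αⱼ‖² = d`. -/

section
variable {X ι 𝕜 E : Type*} [MeasurableSpace X] {μ : Measure X} [Fintype ι]
  [RCLike 𝕜] [NormedAddCommGroup E] [InnerProductSpace 𝕜 E]

def bergmanKernel (f : ι → X → E) (x : X) : ℝ := ∑ j, ‖f j x‖ ^ 2

theorem integrable_inner_of_integrable_norm_sq {f g : X → E}
    (hf : AEStronglyMeasurable f μ) (hg : AEStronglyMeasurable g μ)
    (hf2 : Integrable (fun x => ‖f x‖ ^ 2) μ) (hg2 : Integrable (fun x => ‖g x‖ ^ 2) μ) :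
    Integrable (fun x => inner 𝕜 (f x) (g x)) μ := by
  refine (hf2.add hg2).mono' (hf.inner hg) (Filter.Eventually.of_forall fun x => ?_)
  calc ‖inner 𝕜 (f x) (g x)‖ ≤ ‖f x‖ * ‖g x‖ := norm_inner_le_norm _ _
    _ ≤ ‖f x‖ ^ 2 + ‖g x‖ ^ 2 := by
      nlinarith [norm_nonneg (f x), norm_nonneg (g x), sq_nonneg (‖f x‖ - ‖g x‖)]

theorem inner_sum_smul_sum_smul (c : ι → 𝕜) (v : ι → E) :
    inner 𝕜 (∑ i, c i • v i) (∑ j, c j • v j) =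
      ∑ i, ∑ j, conj (c i) * c j * inner 𝕜 (v i) (v j) := by
  rw [sum_inner]
  simp only [inner_sum, inner_smul_left, inner_smul_right]
  ac_rfl

theorem integral_norm_sq_sum_smul {f : ι → X → E} (hf : ∀ i, AEStronglyMeasurable (f i) μ)
    (hnorm : ∀ i, ∫ x, ‖f i x‖ ^ 2 ∂μ = 1)
    (horth : ∀ i j, i ≠ j → ∫ x, inner 𝕜 (f i x) (f j x) ∂μ = 0) (c : ι → 𝕜) :
    ∫ x, ‖∑ i, c i • f i x‖ ^ 2 ∂μ = ∑ i, ‖c i‖ ^ 2 := by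
  classical
  have hf2 i : Integrable (fun x => ‖f i x‖ ^ 2) μ :=
    .of_integral_ne_zero (by rw [hnorm i]; exact one_ne_zero)
  have hgram i j : ∫ x, inner 𝕜 (f i x) (f j x) ∂μ = if i = j then 1 else 0 := by
    split_ifs with h
    · subst h
      simp_rw [inner_self_eq_norm_sq_to_K]
      exact_mod_cast integral_ofReal.trans (congrArg ((↑) : ℝ → 𝕜) (hnorm i))
    · exact horth i j h
  apply RCLike.ofReal_injective (K := 𝕜)
  calc ((∫ x, ‖∑ i, c i • f i x‖ ^ 2 ∂μ : ℝ) : 𝕜)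
      = ∫ x, ∑ i, ∑ j, conj (c i) * c j * inner 𝕜 (f i x) (f j x) ∂μ := by
        rw [← integral_ofReal]
        push_cast
        simp_rw [← inner_self_eq_norm_sq_to_K, inner_sum_smul_sum_smul]
    _ = ∑ i, ∑ j, conj (c i) * c j * ∫ x, inner 𝕜 (f i x) (f j x) ∂μ := by
        have hint i j :=
          integrable_inner_of_integrable_norm_sq (𝕜 := 𝕜) (hf i) (hf j) (hf2 i) (hf2 j)
        rw [integral_finsetSum _ fun i _ =>
          integrable_finsetSum _ fun j _ => (hint i j).const_mul _]
        simp_rw [integral_finsetSum _ fun j _ => (hint _ j).const_mul _, integral_const_mul]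
    _ = ((∑ i, ‖c i‖ ^ 2 : ℝ) : 𝕜) := by
        simp [hgram, RCLike.conj_mul]

theorem norm_sum_smul_sq_le (c : ι → 𝕜) (v : ι → E) :
    ‖∑ i, c i • v i‖ ^ 2 ≤ (∑ i, ‖c i‖ ^ 2) * ∑ i, ‖v i‖ ^ 2 :=
  calc ‖∑ i, c i • v i‖ ^ 2 ≤ (∑ i, ‖c i‖ * ‖v i‖) ^ 2 := by
        gcongr
        exact (norm_sum_le _ _).trans_eq (by simp_rw [norm_smul])
    _ ≤ (∑ i, ‖c i‖ ^ 2) * ∑ i, ‖v i‖ ^ 2 := Finset.sum_mul_sq_le_sq_mul_sq _ _ _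

theorem norm_sq_le_bergmanKernel {f : ι → X → E} (hf : ∀ i, AEStronglyMeasurable (f i) μ)
    (hnorm : ∀ i, ∫ x, ‖f i x‖ ^ 2 ∂μ = 1)
    (horth : ∀ i j, i ≠ j → ∫ x, inner 𝕜 (f i x) (f j x) ∂μ = 0)
    {a : X → E} (ha : a ∈ Submodule.span 𝕜 (Set.range f)) (ha1 : ∫ x, ‖a x‖ ^ 2 ∂μ ≤ 1) (x : X) :
    ‖a x‖ ^ 2 ≤ bergmanKernel f x := by
  obtain ⟨c, rfl⟩ := (Submodule.mem_span_range_iff_exists_fun 𝕜).1 ha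
  simp only [Finset.sum_apply, Pi.smul_apply] at ha1 ⊢
  have hc : ∑ i, ‖c i‖ ^ 2 ≤ 1 := by rwa [← integral_norm_sq_sum_smul hf hnorm horth]
  calc ‖∑ i, c i • f i x‖ ^ 2 ≤ (∑ i, ‖c i‖ ^ 2) * bergmanKernel f x := norm_sum_smul_sq_le c _
    _ ≤ bergmanKernel f x :=
      mul_le_of_le_one_left (Finset.sum_nonneg fun _ _ => sq_nonneg _) hc

end

theorem lintegral_ofReal_sum {X ι : Type*} [MeasurableSpace X] {μ : Measure X} (s : Finset ι)
    {g : ι → X → ℝ} (hg : ∀ i ∈ s, Integrable (g i) μ) (hg0 : ∀ i ∈ s, ∀ x, 0 ≤ g i x) :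
    ∫⁻ x, ENNReal.ofReal (∑ i ∈ s, g i x) ∂μ = ∑ i ∈ s, ENNReal.ofReal (∫ x, g i x ∂μ) :=
  calc ∫⁻ x, ENNReal.ofReal (∑ i ∈ s, g i x) ∂μ = ∫⁻ x, ∑ i ∈ s, ENNReal.ofReal (g i x) ∂μ :=
        lintegral_congr fun x => ENNReal.ofReal_sum_of_nonneg fun i hi => hg0 i hi x
    _ = ∑ i ∈ s, ∫⁻ x, ENNReal.ofReal (g i x) ∂μ :=
        lintegral_finsetSum' s fun i hi => (hg i hi).aemeasurable.ennreal_ofReal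
    _ = ∑ i ∈ s, ENNReal.ofReal (∫ x, g i x ∂μ) := Finset.sum_congr rfl fun i hi =>
        (ofReal_integral_eq_lintegral_ofReal (hg i hi) (.of_forall (hg0 i hi))).symm

theorem bergman_extremal_integral_le_dim_general
    {X : Type*} [MeasurableSpace X] (μ : Measure X) (N d : ℕ)
    (α : Fin d → X → EuclideanSpace ℂ (Fin N))
    (hmeas : ∀ j, StronglyMeasurable (α j))
    (hnorm : ∀ j, ∫ x, ‖α j x‖ ^ 2 ∂μ = 1)
    (horth : ∀ i j, i ≠ j → ∫ x, (inner ℂ (α i x) (α j x) : ℂ) ∂μ = 0)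
    (S : X → ℝ)
    (hS : ∀ x, S x = sSup {t : ℝ | ∃ a ∈ Submodule.span ℂ (Set.range α),
        (∫ y, ‖a y‖ ^ 2 ∂μ) ≤ 1 ∧ t = ‖a x‖ ^ 2}) :
    ∫⁻ x, ENNReal.ofReal (S x) ∂μ ≤ (d : ℝ≥0∞) := by
  have hS_le x : S x ≤ bergmanKernel α x := by
    rw [hS x]
    refine Real.sSup_le ?_ (Finset.sum_nonneg fun _ _ => sq_nonneg _)
    rintro _ ⟨a, ha, ha1, rfl⟩
    exact norm_sq_le_bergmanKernel (fun j => (hmeas j).aestronglyMeasurable) hnorm horth ha ha1 x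
  calc ∫⁻ x, ENNReal.ofReal (S x) ∂μ ≤ ∫⁻ x, ENNReal.ofReal (bergmanKernel α x) ∂μ :=
        lintegral_mono fun x => ENNReal.ofReal_le_ofReal (hS_le x)
    _ = ∑ j, ENNReal.ofReal (∫ x, ‖α j x‖ ^ 2 ∂μ) :=
        lintegral_ofReal_sum _ (fun j _ => .of_integral_ne_zero (by simp [hnorm j]))
          fun _ _ _ => sq_nonneg _
    _ = d := by simp [hnorm]

/-- First half of the integral inequality in Lemma 2.2: `∫⁻ S ≤ d`. -/
theorem bergman_extremal_integral_le_dim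
    {X : Type*} [MeasurableSpace X] (μ : Measure X) (N d : ℕ) (hN : 0 < N) (hd : 0 < d)
    (α : Fin d → X → EuclideanSpace ℂ (Fin N))
    (hmeas : ∀ j, StronglyMeasurable (α j))
    (hnorm : ∀ j, ∫ x, ‖α j x‖ ^ 2 ∂μ = 1)
    (horth : ∀ i j, i ≠ j → ∫ x, (inner ℂ (α i x) (α j x) : ℂ) ∂μ = 0)
    (S : X → ℝ)
    (hS : ∀ x, S x = sSup {t : ℝ | ∃ a ∈ Submodule.span ℂ (Set.range α),
        (∫ y, ‖a y‖ ^ 2 ∂μ) ≤ 1 ∧ t = ‖a x‖ ^ 2}) :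
    ∫⁻ x, ENNReal.ofReal (S x) ∂μ ≤ (d : ℝ≥0∞) :=
  bergman_extremal_integral_le_dim_general μ N d α hmeas hnorm horth S hS
end

section
/- The dimension is bounded by N times the (extended-real-valued lower Lebesgue) integral of the extremal function: d ≤ N · ∫_X S(x) dμ(x). (Second half of the integral inequality in Lemma 2.2 of the paper.) -/
/-!
For `a = ∑ cⱼ αⱼ` in `V`, orthonormality gives `∫ ‖a‖² = ∑ |cⱼ|²`, so by scaling
`‖a x‖² ≤ (∑ |cⱼ|²) S(x)` for every coefficient vector `c`. Choosing `cⱼ` to be the conjugate of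
the `k`-th coordinate of `αⱼ(x)` gives `∑ⱼ |αⱼ(x)ₖ|² ≤ S(x)`, and summing over the `N`
coordinates gives `B ≤ N S` pointwise. Integrating, `d = ∫ B ≤ N ∫ S`.
-/

open MeasureTheory Finset
open scoped ENNReal InnerProductSpace

section

variable {X 𝕜 E ι : Type*} [MeasurableSpace X] {μ : Measure X} [RCLike 𝕜]

section Extremal

variable [NormedAddCommGroup E] [NormedSpace 𝕜 E]

/-- The extremal function `S` of `V` is `sSup (extremalSet μ V ·)`. -/
def extremalSet (μ : Measure X) (V : Submodule 𝕜 (X → E)) (x : X) : Set ℝ :=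
  {t | ∃ a ∈ V, (∫ y, ‖a y‖ ^ 2 ∂μ) ≤ 1 ∧ t = ‖a x‖ ^ 2}

variable {V : Submodule 𝕜 (X → E)} {x : X}

theorem zero_mem_extremalSet : (0 : ℝ) ∈ extremalSet μ V x :=
  ⟨0, V.zero_mem, by simp, by simp⟩

theorem sSup_extremalSet_nonneg (h : BddAbove (extremalSet μ V x)) :
    0 ≤ sSup (extremalSet μ V x) :=
  le_csSup h zero_mem_extremalSet

theorem norm_sq_le_integral_mul_sSup_extremalSet (h : BddAbove (extremalSet μ V x))
    {a : X → E} (ha : a ∈ V) (hpos : 0 < ∫ y, ‖a y‖ ^ 2 ∂μ) :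
    ‖a x‖ ^ 2 ≤ (∫ y, ‖a y‖ ^ 2 ∂μ) * sSup (extremalSet μ V x) := by
  set s := ∫ y, ‖a y‖ ^ 2 ∂μ
  set r := (√s)⁻¹
  have hrs : r ^ 2 * s = 1 := by
    rw [inv_pow, Real.sq_sqrt hpos.le, inv_mul_cancel₀ hpos.ne']
  have hmem : r ^ 2 * ‖a x‖ ^ 2 ∈ extremalSet μ V x := by
    refine ⟨(r : 𝕜) • a, V.smul_mem _ ha, ?_, ?_⟩ <;>
      simp [norm_smul, mul_pow, integral_const_mul, s, hrs]
  calc ‖a x‖ ^ 2 = s * (r ^ 2 * ‖a x‖ ^ 2) := by rw [← mul_assoc, mul_comm s, hrs, one_mul]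
    _ ≤ s * sSup (extremalSet μ V x) := by gcongr; exact le_csSup h hmem

end Extremal

theorem norm_sq_sum_smul_le [Fintype ι] [SeminormedAddCommGroup E] [NormedSpace 𝕜 E]
    (c : ι → 𝕜) (v : ι → E) :
    ‖∑ j, c j • v j‖ ^ 2 ≤ (∑ j, ‖c j‖ ^ 2) * ∑ j, ‖v j‖ ^ 2 := by
  calc ‖∑ j, c j • v j‖ ^ 2 ≤ (∑ j, ‖c j‖ * ‖v j‖) ^ 2 := by
        gcongr
        exact (norm_sum_le _ _).trans_eq (by simp only [norm_smul])
    _ ≤ (∑ j, ‖c j‖ ^ 2) * ∑ j, ‖v j‖ ^ 2 := sum_mul_sq_le_sq_mul_sq _ _ _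

section Orthonormal

variable [NormedAddCommGroup E] [InnerProductSpace 𝕜 E]

theorem integrable_inner_of_memLp_two {f g : X → E} (hf : MemLp f 2 μ) (hg : MemLp g 2 μ) :
    Integrable (fun x => ⟪f x, g x⟫_𝕜) μ := by
  refine (L2.integrable_inner (𝕜 := 𝕜) (hf.toLp f) (hg.toLp g)).congr ?_
  filter_upwards [hf.coeFn_toLp, hg.coeFn_toLp] with x hfx hgx
  rw [hfx, hgx]

theorem integral_inner_self_eq_ofReal (f : X → E) :
    ∫ x, ⟪f x, f x⟫_𝕜 ∂μ = ((∫ x, ‖f x‖ ^ 2 ∂μ : ℝ) : 𝕜) := by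
  simp_rw [inner_self_eq_norm_sq_to_K]
  exact_mod_cast integral_ofReal (𝕜 := 𝕜)

variable (𝕜 μ) in
structure OrthonormalL2 [DecidableEq ι] (α : ι → X → E) : Prop where
  memLp : ∀ j, MemLp (α j) 2 μ
  integral_inner : ∀ i j, ∫ x, ⟪α i x, α j x⟫_𝕜 ∂μ = if i = j then 1 else 0

variable [Fintype ι] [DecidableEq ι] {α : ι → X → E}

theorem OrthonormalL2.integral_norm_sq_sum_smul (hα : OrthonormalL2 𝕜 μ α) (c : ι → 𝕜) :
    ∫ x, ‖∑ j, c j • α j x‖ ^ 2 ∂μ = ∑ j, ‖c j‖ ^ 2 := by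
  have hexp : ∀ x, ⟪∑ i, c i • α i x, ∑ j, c j • α j x⟫_𝕜
      = ∑ j, ∑ i, c j * ((starRingEnd 𝕜) (c i) * ⟪α i x, α j x⟫_𝕜) := fun x => by
    simp only [sum_inner, inner_smul_left, inner_sum, inner_smul_right, mul_sum]
  have hint : ∀ j i, Integrable (fun x => c j * ((starRingEnd 𝕜) (c i) * ⟪α i x, α j x⟫_𝕜)) μ :=
    fun j i => ((integrable_inner_of_memLp_two (hα.memLp i) (hα.memLp j)).const_mul _).const_mul _
  apply RCLike.ofReal_injective (K := 𝕜)
  rw [← integral_inner_self_eq_ofReal]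
  simp_rw [hexp]
  rw [integral_finsetSum _ fun j _ => integrable_finsetSum _ fun i _ => hint j i]
  simp_rw [integral_finsetSum _ fun i _ => hint _ i, integral_const_mul, hα.integral_inner]
  simp [RCLike.mul_conj]

theorem OrthonormalL2.bddAbove_extremalSet_span (hα : OrthonormalL2 𝕜 μ α) (x : X) :
    BddAbove (extremalSet μ (Submodule.span 𝕜 (Set.range α)) x) := by
  refine ⟨∑ j, ‖α j x‖ ^ 2, ?_⟩
  rintro _ ⟨a, ha, hint, rfl⟩
  obtain ⟨c, rfl⟩ := (Submodule.mem_span_range_iff_exists_fun 𝕜).1 ha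
  simp only [Finset.sum_apply, Pi.smul_apply] at hint ⊢
  rw [hα.integral_norm_sq_sum_smul] at hint
  calc ‖∑ j, c j • α j x‖ ^ 2 ≤ (∑ j, ‖c j‖ ^ 2) * ∑ j, ‖α j x‖ ^ 2 := norm_sq_sum_smul_le c _
    _ ≤ ∑ j, ‖α j x‖ ^ 2 := mul_le_of_le_one_left (by positivity) hint

theorem OrthonormalL2.norm_sq_sum_smul_le_mul_sSup_extremalSet (hα : OrthonormalL2 𝕜 μ α)
    (x : X) (c : ι → 𝕜) (hc : 0 < ∑ j, ‖c j‖ ^ 2) :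
    ‖∑ j, c j • α j x‖ ^ 2 ≤
      (∑ j, ‖c j‖ ^ 2) * sSup (extremalSet μ (Submodule.span 𝕜 (Set.range α)) x) := by
  have hmem : (fun y => ∑ j, c j • α j y) ∈ Submodule.span 𝕜 (Set.range α) :=
    (Submodule.mem_span_range_iff_exists_fun 𝕜).2 ⟨c, by ext; simp⟩
  have h := norm_sq_le_integral_mul_sSup_extremalSet (hα.bddAbove_extremalSet_span x) hmem
  rw [hα.integral_norm_sq_sum_smul] at h
  exact h hc

end Orthonormal

section Coordinates

variable {n : Type*} [Fintype n] [Fintype ι]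

/-- Testing against `cⱼ = conj (vⱼ k)` picks out the `k`-th coordinates. -/
theorem sum_norm_sq_apply_le {v : ι → EuclideanSpace 𝕜 n} {s : ℝ} (hs : 0 ≤ s)
    (h : ∀ c : ι → 𝕜, 0 < ∑ j, ‖c j‖ ^ 2 → ‖∑ j, c j • v j‖ ^ 2 ≤ (∑ j, ‖c j‖ ^ 2) * s)
    (k : n) : ∑ j, ‖v j k‖ ^ 2 ≤ s := by
  set t := ∑ j, ‖v j k‖ ^ 2
  rcases (show 0 ≤ t by positivity).eq_or_lt with ht | ht
  · exact ht ▸ hs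
  have hcoord : (∑ j, (starRingEnd 𝕜) (v j k) • v j) k = (t : 𝕜) := by
    simp [t, RCLike.conj_mul]
  have hle : t ^ 2 ≤ t * s := by
    calc t ^ 2 = ‖(∑ j, (starRingEnd 𝕜) (v j k) • v j) k‖ ^ 2 := by
          rw [hcoord, RCLike.norm_ofReal, abs_of_pos ht]
      _ ≤ ‖∑ j, (starRingEnd 𝕜) (v j k) • v j‖ ^ 2 := by gcongr; exact PiLp.norm_apply_le _ k
      _ ≤ t * s := by simpa [t] using h (fun j => (starRingEnd 𝕜) (v j k)) (by simpa [t] using ht)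
  nlinarith

theorem sum_norm_sq_le_card_mul {v : ι → EuclideanSpace 𝕜 n} {s : ℝ} (hs : 0 ≤ s)
    (h : ∀ c : ι → 𝕜, 0 < ∑ j, ‖c j‖ ^ 2 → ‖∑ j, c j • v j‖ ^ 2 ≤ (∑ j, ‖c j‖ ^ 2) * s) :
    ∑ j, ‖v j‖ ^ 2 ≤ Fintype.card n * s := by
  calc ∑ j, ‖v j‖ ^ 2 = ∑ k, ∑ j, ‖v j k‖ ^ 2 := by
        simp_rw [EuclideanSpace.norm_sq_eq]; exact sum_comm
    _ ≤ ∑ _k : n, s := sum_le_sum fun k _ => sum_norm_sq_apply_le hs h k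
    _ = Fintype.card n * s := by simp

end Coordinates

end

theorem bergman_dim_le_integral_general
    {X : Type*} [MeasurableSpace X] (μ : Measure X) (N d : ℕ)
    (α : Fin d → X → EuclideanSpace ℂ (Fin N))
    (hmeas : ∀ j, StronglyMeasurable (α j))
    (hnorm : ∀ j, ∫ x, ‖α j x‖ ^ 2 ∂μ = 1)
    (horth : ∀ i j, i ≠ j → ∫ x, (inner ℂ (α i x) (α j x) : ℂ) ∂μ = 0)
    (S : X → ℝ)
    (hS : ∀ x, S x = sSup {t : ℝ | ∃ a ∈ Submodule.span ℂ (Set.range α),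
        (∫ y, ‖a y‖ ^ 2 ∂μ) ≤ 1 ∧ t = ‖a x‖ ^ 2}) :
    (d : ℝ≥0∞) ≤ (N : ℝ≥0∞) * ∫⁻ x, ENNReal.ofReal (S x) ∂μ := by
  have hsq : ∀ j, Integrable (fun x => ‖α j x‖ ^ 2) μ :=
    fun j => .of_integral_ne_zero (by simp [hnorm j])
  have hL2 : ∀ j, MemLp (α j) 2 μ :=
    fun j => (memLp_two_iff_integrable_sq_norm (hmeas j).aestronglyMeasurable).2 (hsq j)
  have hON : OrthonormalL2 ℂ μ α := by
    refine ⟨hL2, fun i j => ?_⟩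
    split_ifs with h
    · rw [h, integral_inner_self_eq_ofReal, hnorm, RCLike.ofReal_one]
    · exact horth i j h
  have hB : ∀ x, ∑ j, ‖α j x‖ ^ 2 ≤ N * S x := fun x => by
    have h := sum_norm_sq_le_card_mul (sSup_extremalSet_nonneg
      (hON.bddAbove_extremalSet_span x)) (hON.norm_sq_sum_smul_le_mul_sSup_extremalSet x)
    rw [Fintype.card_fin] at h
    exact hS x ▸ h
  calc (d : ℝ≥0∞) = ∑ j, ∫⁻ x, ENNReal.ofReal (‖α j x‖ ^ 2) ∂μ := by
        simp_rw [← ofReal_integral_eq_lintegral_ofReal (hsq _) (.of_forall fun _ => sq_nonneg _),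
          hnorm]
        simp
    _ = ∫⁻ x, ENNReal.ofReal (∑ j, ‖α j x‖ ^ 2) ∂μ := by
        rw [← lintegral_finsetSum' _ fun j _ => (hsq j).aemeasurable.ennreal_ofReal]
        simp_rw [ENNReal.ofReal_sum_of_nonneg fun j _ => sq_nonneg ‖α j _‖]
    _ ≤ ∫⁻ x, ENNReal.ofReal (N * S x) ∂μ :=
        lintegral_mono fun x => ENNReal.ofReal_le_ofReal (hB x)
    _ = N * ∫⁻ x, ENNReal.ofReal (S x) ∂μ := by
        simp_rw [ENNReal.ofReal_mul (Nat.cast_nonneg N), ENNReal.ofReal_natCast]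
        exact lintegral_const_mul' _ _ (ENNReal.natCast_ne_top N)

/-- Second half of the integral inequality in Lemma 2.2: `d ≤ N * ∫⁻ S`. -/
theorem bergman_dim_le_integral
    {X : Type*} [MeasurableSpace X] (μ : Measure X) (N d : ℕ) (hN : 0 < N) (hd : 0 < d)
    (α : Fin d → X → EuclideanSpace ℂ (Fin N))
    (hmeas : ∀ j, StronglyMeasurable (α j))
    (hnorm : ∀ j, ∫ x, ‖α j x‖ ^ 2 ∂μ = 1)
    (horth : ∀ i j, i ≠ j → ∫ x, (inner ℂ (α i x) (α j x) : ℂ) ∂μ = 0)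
    (S : X → ℝ)
    (hS : ∀ x, S x = sSup {t : ℝ | ∃ a ∈ Submodule.span ℂ (Set.range α),
        (∫ y, ‖a y‖ ^ 2 ∂μ) ≤ 1 ∧ t = ‖a x‖ ^ 2}) :
    (d : ℝ≥0∞) ≤ (N : ℝ≥0∞) * ∫⁻ x, ENNReal.ofReal (S x) ∂μ :=
  bergman_dim_le_integral_general μ N d α hmeas hnorm horth S hS
end
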